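/- arXiv:1808.02711 — 3 statements merged into one kernel-verified Lean document; each statement's English description precedes it below -/
import Mathlib

section
/- Let I ⊆ [0,1] be a finite set and let D(I) = {(m-1+f)/m : m ∈ ℕ, m ≥ 1, f ∈ I₊} ∩ [0,1], where I₊ = {∑ a_j i_j : i_j ∈ I, a_j ∈ ℕ} ∩ [0,1]. Then the only accumulation point of D(I) in ℝ is 1; that is, for every ε > 0 the set D(I) ∩ (-∞, 1-ε] is finite. -/
/-- The set `I₊` of all finite ℕ-linear combinations of elements of `I` lying in `[0,1]`. -/
def hyperPlus (I : Set ℝ) : Set ℝ :=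
  {x | ∃ (m : ℕ) (a : Fin m → ℕ) (i : Fin m → ℝ),
      (∀ j, i j ∈ I) ∧ x = ∑ j, (a j : ℝ) * i j} ∩ Set.Icc 0 1

/-- The hyperstandard set `D(I) = {(m-1+f)/m : m ≥ 1, f ∈ I₊} ∩ [0,1]`. -/
def hyperD (I : Set ℝ) : Set ℝ :=
  {x | ∃ m : ℕ, 1 ≤ m ∧ ∃ f ∈ hyperPlus I, x = ((m : ℝ) - 1 + f) / m} ∩ Set.Icc 0 1

open Finset in
lemma hyperPlus_finite (I : Set ℝ) (hI : I ⊆ Set.Icc 0 1) (hfin : I.Finite) :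
    (hyperPlus I).Finite := by
  classical
  set s : Finset ℝ := hfin.toFinset with hs
  have hmem : ∀ y ∈ s, y ∈ Set.Icc (0:ℝ) 1 := fun y hy => hI (hfin.mem_toFinset.mp hy)
  -- choose δ > 0 below every nonzero element of s
  obtain ⟨δ, hδpos, hδ⟩ : ∃ δ : ℝ, 0 < δ ∧ ∀ y ∈ s, y ≠ 0 → δ ≤ y := by
    by_cases ht : (s.filter (· ≠ (0:ℝ))).Nonempty
    · refine ⟨(s.filter (· ≠ (0:ℝ))).min' ht, ?_, ?_⟩
      · have h := (s.filter (· ≠ (0:ℝ))).min'_mem ht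
        rw [mem_filter] at h
        exact lt_of_le_of_ne (hmem _ h.1).1 (Ne.symm h.2)
      · intro y hy hy0
        exact min'_le _ _ (mem_filter.mpr ⟨hy, hy0⟩)
    · refine ⟨1, one_pos, fun y hy hy0 => absurd ⟨y, mem_filter.mpr ⟨hy, hy0⟩⟩ ht⟩
  set N : ℕ := ⌈1/δ⌉₊ with hN
  have key : hyperPlus I ⊆
      (fun c : ↥s → ℕ => ∑ p : ↥s, (c p : ℝ) * (p : ℝ)) ''
        (Set.pi Set.univ fun _ => Set.Iic N) := by
    rintro x ⟨⟨m, a, i, hi, hx⟩, hx0, hx1⟩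
    have hiS : ∀ j, i j ∈ s := fun j => hfin.mem_toFinset.mpr (hi j)
    set c : ↥s → ℕ := fun p =>
      if (p : ℝ) = 0 then 0 else ∑ j ∈ univ.filter (fun j => i j = (p : ℝ)), a j with hc
    have hsum : ∑ p : ↥s, (c p : ℝ) * (p : ℝ) = x := by
      rw [hx]
      rw [Finset.sum_coe_sort s (fun y => ((if y = 0 then 0 else
        ∑ j ∈ univ.filter (fun j => i j = y), a j : ℕ) : ℝ) * y)]
      rw [← Finset.sum_fiberwise_of_maps_to (g := i) (fun j _ => hiS j)
        (f := fun j => (a j : ℝ) * i j)]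
      refine Finset.sum_congr rfl fun y hy => ?_
      by_cases hy0 : y = 0
      · subst hy0
        rw [if_pos rfl, Nat.cast_zero, zero_mul]
        exact (Finset.sum_eq_zero fun j hj => by
          rw [Finset.mem_filter] at hj; rw [hj.2, mul_zero]).symm
      · rw [if_neg hy0, Nat.cast_sum, Finset.sum_mul]
        refine Finset.sum_congr rfl fun j hj => ?_
        rw [mem_filter] at hj
        rw [hj.2]
    have hcb : ∀ p : ↥s, c p ≤ N := by
      intro p
      by_cases hp0 : (p : ℝ) = 0
      · simp [hc, hp0]
      · have hpδ : δ ≤ (p : ℝ) := hδ _ p.2 hp0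
        have hppos : (0:ℝ) < p := lt_of_lt_of_le hδpos hpδ
        have hterm : (c p : ℝ) * (p : ℝ) ≤ x := by
          rw [← hsum]
          refine Finset.single_le_sum (f := fun q : ↥s => (c q : ℝ) * (q : ℝ))
            (fun q _ => mul_nonneg (Nat.cast_nonneg _) (hmem _ q.2).1) (mem_univ p)
        have h1 : (c p : ℝ) ≤ 1 / δ := by
          rw [le_div_iff₀ hδpos]
          calc (c p : ℝ) * δ ≤ (c p : ℝ) * p := by
                exact mul_le_mul_of_nonneg_left hpδ (Nat.cast_nonneg _)
            _ ≤ x := hterm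
            _ ≤ 1 := hx1
        exact_mod_cast h1.trans (Nat.le_ceil _)
    exact ⟨c, fun p _ => hcb p, hsum⟩
  exact ((Set.Finite.pi fun _ => Set.finite_Iic N).image _).subset key

theorem hyperD_accumulation_only_at_one (I : Set ℝ) (hI : I ⊆ Set.Icc 0 1)
    (hfin : I.Finite) :
    ∀ ε : ℝ, 0 < ε → (hyperD I ∩ Set.Iic (1 - ε)).Finite := by
  intro ε hε
  set M : ℕ := ⌈1/ε⌉₊ with hM
  have key : hyperD I ∩ Set.Iic (1 - ε) ⊆
      (fun p : ℕ × ℝ => ((p.1 : ℝ) - 1 + p.2) / p.1) ''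
        ((Set.Iic M) ×ˢ hyperPlus I) := by
    rintro x ⟨⟨⟨m, hm1, f, hf, hx⟩, _⟩, hxle⟩
    have hmpos : (0:ℝ) < m := by exact_mod_cast hm1
    have hf01 : f ∈ Set.Icc (0:ℝ) 1 := hf.2
    have hmM : m ≤ M := by
      have h1 : ((m : ℝ) - 1 + f) / m ≤ 1 - ε := hx ▸ hxle
      have h2 : (m : ℝ) - 1 + f ≤ (1 - ε) * m := (div_le_iff₀ hmpos).mp h1
      have h3 : ε * m ≤ 1 - f := by nlinarith
      have h4 : (m : ℝ) ≤ 1 / ε := by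
        rw [le_div_iff₀ hε]
        nlinarith [hf01.1]
      exact_mod_cast h4.trans (Nat.le_ceil (1/ε))
    exact ⟨(m, f), ⟨hmM, hf.1, hf.2⟩, hx.symm⟩
  exact (((Set.finite_Iic M).prod (hyperPlus_finite I hI hfin)).image _).subset key
end

section
/- Let I ⊆ [0,1] be a finite set and D(I) the associated hyperstandard set. Then D(I) satisfies the descending chain condition: there is no strictly decreasing infinite sequence of elements of D(I). Equivalently, every nonempty subset of D(I) has a minimum. -/
lemma hyperD_inter_finite (I : Set ℝ) (hI : I ⊆ Set.Icc 0 1) (hfin : I.Finite)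
    (c : ℝ) (hc : c < 1) : (hyperD I ∩ Set.Iic c).Finite := by
  have hP : (hyperPlus I).Finite := hyperPlus_finite I hI hfin
  set M : ℕ := ⌈1/(1-c)⌉₊ with hM
  have hsub : hyperD I ∩ Set.Iic c ⊆
      ⋃ m ∈ Finset.range (M+1), (fun f => ((m:ℝ) - 1 + f) / m) '' hyperPlus I := by
    rintro x ⟨⟨⟨m, hm1, f, hf, rfl⟩, _⟩, hxc⟩
    have hmpos : (0:ℝ) < m := by exact_mod_cast hm1
    have hf0 : (0:ℝ) ≤ f := hf.2.1
    have hle : (m:ℝ) * (1 - c) ≤ 1 := by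
      have h1 : (m:ℝ) - 1 + f ≤ c * m := (div_le_iff₀ hmpos).mp hxc
      nlinarith
    have hmM : m ≤ M := by
      have h1c : (0:ℝ) < 1 - c := by linarith
      have : (m:ℝ) ≤ 1/(1-c) := by
        rw [le_div_iff₀ h1c]; linarith
      have : (m:ℝ) ≤ M := this.trans (Nat.le_ceil _)
      exact_mod_cast this
    refine Set.mem_biUnion (Finset.mem_range.mpr (Nat.lt_succ_of_le hmM)) ?_
    exact ⟨f, hf, rfl⟩
  refine Set.Finite.subset ?_ hsub
  exact (Finset.range (M+1)).finite_toSet.biUnion (fun m _ => hP.image _)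

lemma hyperD_min (I : Set ℝ) (hI : I ⊆ Set.Icc 0 1) (hfin : I.Finite)
    (S : Set ℝ) (hS : S ⊆ hyperD I) (hne : S.Nonempty) : ∃ a ∈ S, ∀ x ∈ S, a ≤ x := by
  by_cases h : ∃ x ∈ S, x < 1
  · obtain ⟨x, hxS, hx1⟩ := h
    set T : Set ℝ := S ∩ Set.Iic x with hT
    have hTfin : T.Finite :=
      (hyperD_inter_finite I hI hfin x hx1).subset
        (fun z hz => ⟨hS hz.1, hz.2⟩)
    have hTne : T.Nonempty := ⟨x, hxS, le_refl x⟩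
    obtain ⟨a, haT, ha⟩ := Set.exists_min_image T id hTfin hTne
    refine ⟨a, haT.1, fun z hz => ?_⟩
    by_cases hzx : z ≤ x
    · exact ha z ⟨hz, hzx⟩
    · exact le_trans (haT.2) (le_of_not_ge hzx)
  · push_neg at h
    obtain ⟨s0, hs0⟩ := hne
    exact ⟨s0, hs0, fun z hz => le_trans (hS hs0).2.2 (h z hz)⟩

theorem hyperD_DCC (I : Set ℝ) (hI : I ⊆ Set.Icc 0 1) (hfin : I.Finite) :
    (¬ ∃ f : ℕ → ℝ, (∀ n, f n ∈ hyperD I) ∧ StrictAnti f) ∧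
    (∀ S : Set ℝ, S ⊆ hyperD I → S.Nonempty → ∃ a ∈ S, ∀ x ∈ S, a ≤ x) := by
  constructor
  · rintro ⟨f, hf, hanti⟩
    obtain ⟨a, ⟨n, rfl⟩, ha⟩ := hyperD_min I hI hfin (Set.range f)
      (by rintro x ⟨n, rfl⟩; exact hf n) ⟨f 0, 0, rfl⟩
    exact absurd (ha (f (n+1)) ⟨n+1, rfl⟩) (not_le.mpr (hanti (Nat.lt_succ_self n)))
  · exact hyperD_min I hI hfin
end

section
/- Let R → S be a faithfully flat ring homomorphism and let A be an R-algebra. If the S-algebra S ⊗_R A is finitely generated, then A is a finitely generated R-algebra. -/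
open TensorProduct in
theorem finiteType_of_faithfullyFlat_base_change
    {R S A : Type*} [CommRing R] [CommRing S] [CommRing A]
    [Algebra R S] [Algebra R A] [Module.FaithfullyFlat R S]
    (hfg : Algebra.FiniteType S (S ⊗[R] A)) :
    Algebra.FiniteType R A :=
  Algebra.FiniteType.of_finiteType_tensorProduct_of_faithfullyFlat S
end
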